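/- arXiv:2304.09930 — 5 statements merged into one kernel-verified Lean document; each statement's English description precedes it below -/
import Mathlib

section
/- Let f : S → ℝ be a function on a finite state space, δ : S → S → ℝ≥0 a stochastic matrix (rows sum to 1), and off : S → ℝ with off(s) ≥ 0 for all s. Suppose R ⊆ S is nonempty, closed under δ (δ(s, s') > 0 and s ∈ R implies s' ∈ R), strongly connected within R (for all s, t ∈ R there is a δ-positive-probability path from s to t inside R), and f(s) = off(s) + ∑_{s'} δ(s, s') * f(s') for all s ∈ R. Then off(s) = 0 for all s ∈ R. -/
/-- On a finite state space with a stochastic matrix `δ`, nonnegative offsets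
`off`, and a nonempty, closed, strongly connected (via positive-probability
paths) set `R` on which `f` satisfies the affine fixpoint equation, the
offsets vanish on `R`. -/
theorem offset_eq_zero_on_closed_component
    {S : Type*} [Fintype S]
    (δ : S → S → ℝ) (off f : S → ℝ) (R : Set S)
    (hδ0 : ∀ s s', 0 ≤ δ s s')
    (hδ1 : ∀ s, ∑ s', δ s s' = 1)
    (hoff : ∀ s, 0 ≤ off s)
    (hne : R.Nonempty)
    (hclosed : ∀ s ∈ R, ∀ s', 0 < δ s s' → s' ∈ R)
    (hconn : ∀ s ∈ R, ∀ t ∈ R,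
      Relation.ReflTransGen (fun u v => u ∈ R ∧ 0 < δ u v) s t)
    (hfix : ∀ s ∈ R, f s = off s + ∑ s', δ s s' * f s') :
    ∀ s ∈ R, off s = 0 := by
  obtain ⟨s₀, hs₀R, hmin⟩ := Set.exists_min_image R f R.toFinite hne
  have key : ∀ s ∈ R, f s = f s₀ →
      off s = 0 ∧ ∀ s', 0 < δ s s' → f s' = f s₀ := by
    intro s hs hfs
    have hterm : ∀ s' ∈ Finset.univ, 0 ≤ δ s s' * (f s' - f s₀) := by
      intro s' _
      rcases (hδ0 s s').eq_or_lt with h | h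
      · simp [← h]
      · exact mul_nonneg h.le (sub_nonneg.2 (hmin s' (hclosed s hs s' h)))
    have hT : ∑ s', δ s s' * (f s' - f s₀) = - off s := by
      have h1 : ∑ s', δ s s' * (f s' - f s₀)
          = (∑ s', δ s s' * f s') - (∑ s', δ s s') * f s₀ := by
        rw [Finset.sum_mul]
        rw [← Finset.sum_sub_distrib]
        congr 1; ext s'; ring
      rw [h1, hδ1 s]
      have := hfix s hs
      linarith
    have hoffs : off s = 0 := by
      have h2 : 0 ≤ ∑ s', δ s s' * (f s' - f s₀) := Finset.sum_nonneg hterm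
      have := hoff s
      linarith [hT ▸ h2]
    refine ⟨hoffs, ?_⟩
    have hT0 : ∑ s', δ s s' * (f s' - f s₀) = 0 := by rw [hT, hoffs]; ring
    have := (Finset.sum_eq_zero_iff_of_nonneg hterm).mp hT0
    intro s' hpos
    have := this s' (Finset.mem_univ s')
    rcases mul_eq_zero.mp this with h | h
    · exact absurd h hpos.ne'
    · linarith [sub_eq_zero.mp h]
  intro t ht
  have hpath := hconn s₀ hs₀R t ht
  have hft : f t = f s₀ := by
    induction hpath with
    | refl => rfl
    | tail _ hbc ih =>
      exact (key _ hbc.1 (ih hbc.1)).2 _ hbc.2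
  exact (key t ht hft).1
end

section
/- Under the same hypotheses as the previous statement (finite state space, stochastic matrix δ, nonnegative offsets off, R closed and strongly connected under δ, and f(s) = off(s) + ∑_{s'} δ(s,s') f(s') on R), the function f is constant on R: f(s) = f(t) for all s, t ∈ R. -/
/-- On a finite state space with a stochastic matrix `δ`, nonnegative offsets
`off`, and a nonempty, closed, strongly connected (via positive-probability
paths) set `R` on which `f` satisfies the affine fixpoint equation, the
offsets vanish on `R`. -/
theorem fixpoint_constant_on_closed_component
    {S : Type*} [Fintype S]
    (δ : S → S → ℝ) (off f : S → ℝ) (R : Set S)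
    (hδ0 : ∀ s s', 0 ≤ δ s s')
    (hδ1 : ∀ s, ∑ s', δ s s' = 1)
    (hoff : ∀ s, 0 ≤ off s)
    (hne : R.Nonempty)
    (hclosed : ∀ s ∈ R, ∀ s', 0 < δ s s' → s' ∈ R)
    (hconn : ∀ s ∈ R, ∀ t ∈ R,
      Relation.ReflTransGen (fun u v => u ∈ R ∧ 0 < δ u v) s t)
    (hfix : ∀ s ∈ R, f s = off s + ∑ s', δ s s' * f s') :
    ∀ s ∈ R, ∀ t ∈ R, f s = f t := by
  obtain ⟨s₀, hs₀, hmin⟩ := Set.exists_min_image R f (Set.toFinite R) hne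
  set m := f s₀ with hm
  -- step: minimum propagates along positive transitions within R
  have step : ∀ u ∈ R, f u = m → ∀ v, 0 < δ u v → f v = m := by
    intro u hu hfu v hv
    have hsum_ge : ∀ s', δ u s' * m ≤ δ u s' * f s' := by
      intro s'
      rcases eq_or_lt_of_le (hδ0 u s') with h | h
      · simp [← h]
      · exact mul_le_mul_of_nonneg_left (hmin s' (hclosed u hu s' h)) (hδ0 u s')
    have hT : m ≤ ∑ s', δ u s' * f s' := by
      calc m = ∑ s', δ u s' * m := by
              rw [← Finset.sum_mul, hδ1]; ring
        _ ≤ ∑ s', δ u s' * f s' := Finset.sum_le_sum fun s' _ => hsum_ge s'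
    have heq : f u = off u + ∑ s', δ u s' * f s' := hfix u hu
    have hTm : ∑ s', δ u s' * f s' = m := by
      have : off u + ∑ s', δ u s' * f s' = m := by rw [← heq, hfu]
      nlinarith [hoff u]
    have hzero : ∑ s', δ u s' * f s' - ∑ s', δ u s' * m = 0 := by
      rw [hTm]
      rw [← Finset.sum_mul, hδ1]; ring
    rw [← Finset.sum_sub_distrib] at hzero
    have hall := (Finset.sum_eq_zero_iff_of_nonneg
      (fun s' _ => by have := hsum_ge s'; linarith)).mp hzero
    have hv0 := hall v (Finset.mem_univ v)
    have : δ u v * (f v - m) = 0 := by linarith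
    rcases mul_eq_zero.mp this with h | h
    · exact absurd h hv.ne'
    · linarith
  -- every t ∈ R has f t = m
  have hconst : ∀ t ∈ R, f t = m := by
    intro t ht
    have path := hconn s₀ hs₀ t ht
    clear ht
    induction path with
    | refl => rfl
    | tail _ hbc ih =>
      exact step _ hbc.1 ih _ hbc.2
  intro s hs t ht
  rw [hconst s hs, hconst t ht]
end

section
/- Let V : S → ℝ be the value function of a finite turn-based stochastic game for a fixpoint-linear objective, i.e., V(s) = off(s) + max_{a ∈ A(s)} ∑_{s'} δ(s,a,s') V(s') for Maximizer states and V(s) = off(s) + min_{a ∈ A(s)} ∑_{s'} δ(s,a,s') V(s') for Minimizer states, with off ≥ 0. If f : S → ℝ is any other solution of the same system of equations with f ≢ V, then letting d = f − V and d⁺ = max_s d(s), the set S⁺ = {s : d(s) = d⁺} contains, for every state s ∈ S⁺, an action a_s ∈ A(s) such that (i) all successors of (s, a_s) lie in S⁺ and (ii) f(s) = off(s) + ∑_{s'} δ(s, a_s, s') f(s'). -/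
/-- In a finite turn-based stochastic game with a fixpoint-linear objective
(value `V` satisfying the Bellman optimality equations with nonnegative
offsets), if `f` is another solution of the same system with `f ≠ V`, then
every state of `S⁺ = {s : f s − V s = d⁺}` (where `d⁺` is the maximal
difference) has an action all of whose successors stay in `S⁺` and which
witnesses the fixpoint equation for `f`. -/
theorem spurious_fixpoint_max_diff_set
    {S Act : Type*} [Fintype S] [Nonempty S]
    (isMax : S → Bool) (A : S → Finset Act) (hA : ∀ s, (A s).Nonempty)
    (δ : S → Act → S → ℝ)
    (hδ0 : ∀ s a s', 0 ≤ δ s a s')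
    (hδ1 : ∀ s, ∀ a ∈ A s, ∑ s', δ s a s' = 1)
    (off V f : S → ℝ)
    (hoff : ∀ s, 0 ≤ off s)
    (hV : ∀ s, V s = off s +
      (if isMax s then
        (A s).sup' (hA s) (fun a => ∑ s', δ s a s' * V s')
      else
        (A s).inf' (hA s) (fun a => ∑ s', δ s a s' * V s')))
    (hf : ∀ s, f s = off s +
      (if isMax s then
        (A s).sup' (hA s) (fun a => ∑ s', δ s a s' * f s')
      else
        (A s).inf' (hA s) (fun a => ∑ s', δ s a s' * f s')))
    (hne : f ≠ V) :
    ∀ s : S,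
      f s - V s = Finset.univ.sup' Finset.univ_nonempty (fun t => f t - V t) →
      ∃ a ∈ A s,
        (∀ s', 0 < δ s a s' →
          f s' - V s' =
            Finset.univ.sup' Finset.univ_nonempty (fun t => f t - V t)) ∧
        f s = off s + ∑ s', δ s a s' * f s' := by
  intro s hs
  set D := Finset.univ.sup' Finset.univ_nonempty (fun t => f t - V t) with hD
  have key : ∃ a ∈ A s, f s ≤ off s + ∑ s', δ s a s' * f s' ∧
      off s + ∑ s', δ s a s' * V s' ≤ V s := by
    by_cases hm : isMax s
    · obtain ⟨a, ha, hsup⟩ := Finset.exists_mem_eq_sup' (hA s) (fun a => ∑ s', δ s a s' * f s')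
      refine ⟨a, ha, ?_, ?_⟩
      · rw [hf s, if_pos hm, hsup]
      · rw [hV s, if_pos hm]
        have := Finset.le_sup' (fun a => ∑ s', δ s a s' * V s') ha
        linarith
    · obtain ⟨a, ha, hinf⟩ := Finset.exists_mem_eq_inf' (hA s) (fun a => ∑ s', δ s a s' * V s')
      refine ⟨a, ha, ?_, ?_⟩
      · rw [hf s, if_neg hm]
        have := Finset.inf'_le (fun a => ∑ s', δ s a s' * f s') ha
        linarith
      · rw [hV s, if_neg hm, hinf]
  obtain ⟨a, ha, hfle, hVge⟩ := key
  have hle : ∀ t, f t - V t ≤ D := fun t => by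
    rw [hD]; exact Finset.le_sup' (fun t => f t - V t) (Finset.mem_univ t)
  have hsumD : ∑ s', δ s a s' * D = D := by
    rw [← Finset.sum_mul, hδ1 s a ha, one_mul]
  have hsplit : ∑ s', δ s a s' * (f s' - V s') =
      ∑ s', δ s a s' * f s' - ∑ s', δ s a s' * V s' := by
    rw [← Finset.sum_sub_distrib]
    exact Finset.sum_congr rfl (fun t _ => by ring)
  have hsum1 : ∑ s', δ s a s' * (f s' - V s') ≤ D := by
    calc ∑ s', δ s a s' * (f s' - V s') ≤ ∑ s', δ s a s' * D :=
        Finset.sum_le_sum (fun t _ => mul_le_mul_of_nonneg_left (hle t) (hδ0 s a t))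
      _ = D := hsumD
  have hsum2 : D ≤ ∑ s', δ s a s' * (f s' - V s') := by
    rw [hsplit]; linarith
  have heq : ∑ s', δ s a s' * (f s' - V s') = D := le_antisymm hsum1 hsum2
  have hzsum : ∑ s', δ s a s' * (D - (f s' - V s')) = 0 := by
    have : ∑ s', δ s a s' * (D - (f s' - V s')) =
        ∑ s', δ s a s' * D - ∑ s', δ s a s' * (f s' - V s') := by
      rw [← Finset.sum_sub_distrib]
      exact Finset.sum_congr rfl (fun t _ => by ring)
    rw [this, hsumD, heq, sub_self]
  have hzero : ∀ s', 0 < δ s a s' → f s' - V s' = D := by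
    intro s' hpos
    have hall := (Finset.sum_eq_zero_iff_of_nonneg (fun t _ =>
      mul_nonneg (hδ0 s a t) (by linarith [hle t]))).mp hzsum s' (Finset.mem_univ s')
    rcases mul_eq_zero.mp hall with h | h
    · linarith
    · linarith
  refine ⟨a, ha, hzero, ?_⟩
  have : ∑ s', δ s a s' * f s' - ∑ s', δ s a s' * V s' = D := by
    rw [← hsplit]; exact heq
  linarith
end

section
/- Consider a finite turn-based stochastic game, a fixpoint-linear objective with offsets off ≥ 0, and an end component E = (R, B). If an assignment f : S → ℝ satisfies f(s) = ∑_{s'} δ(s,a,s') f(s') for all s ∈ R and a ∈ A(s) ∩ B (i.e., E is a SEC for f), then f(s) = f(s') for all s, s' ∈ R. -/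
/-- If `E = (R, B)` is an end component of a finite stochastic game and the
assignment `f` satisfies `f s = ∑_{s'} δ(s,a,s') f s'` for every `s ∈ R` and
every available action `a ∈ A(s) ∩ B` (i.e., `E` is a SEC for `f`), then `f`
is constant on `R`. -/
theorem sec_assignment_constant
    {S Act : Type*} [Fintype S]
    (A : S → Finset Act) (δ : S → Act → S → ℝ)
    (R : Set S) (B : Finset Act)
    (hδ0 : ∀ s a s', 0 ≤ δ s a s')
    (hδ1 : ∀ s, ∀ a ∈ A s, ∑ s', δ s a s' = 1)
    (hRne : R.Nonempty) (hBne : B.Nonempty)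
    (hB : ∀ s ∈ R, ∃ a ∈ A s, a ∈ B)
    (hclosed : ∀ s ∈ R, ∀ a ∈ A s, a ∈ B → ∀ s', 0 < δ s a s' → s' ∈ R)
    (hconn : ∀ s ∈ R, ∀ t ∈ R,
      Relation.ReflTransGen
        (fun u v => u ∈ R ∧ ∃ a ∈ A u, a ∈ B ∧ 0 < δ u a v) s t)
    (f : S → ℝ)
    (hSEC : ∀ s ∈ R, ∀ a ∈ A s, a ∈ B → f s = ∑ s', δ s a s' * f s') :
    ∀ s ∈ R, ∀ t ∈ R, f s = f t := by
  -- pick a maximizer of f on R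
  obtain ⟨s₀, hs₀R, hmax⟩ := Set.exists_max_image R f (Set.toFinite R) hRne
  set M := f s₀ with hM
  -- one-step preservation of the maximum
  have step : ∀ u ∈ R, f u = M → ∀ v, (∃ a ∈ A u, a ∈ B ∧ 0 < δ u a v) → f v = M := by
    intro u huR hfu v ⟨a, haA, haB, hpos⟩
    have hsum : ∑ s', δ u a s' * (M - f s') = 0 := by
      have h1 : ∑ s', δ u a s' * M = M := by
        rw [← Finset.sum_mul, hδ1 u a haA, one_mul]
      have h2 := hSEC u huR a haA haB
      have : ∑ s', δ u a s' * (M - f s')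
          = (∑ s', δ u a s' * M) - ∑ s', δ u a s' * f s' := by
        rw [← Finset.sum_sub_distrib]
        congr 1; ext s'; ring
      rw [this, h1, ← h2, hfu]
      ring
    have hnn : ∀ s' ∈ Finset.univ, 0 ≤ δ u a s' * (M - f s') := by
      intro s' _
      rcases eq_or_lt_of_le (hδ0 u a s') with h | h
      · rw [← h]; simp
      · have hs'R : s' ∈ R := hclosed u huR a haA haB s' h
        have : f s' ≤ M := hmax s' hs'R
        exact mul_nonneg (le_of_lt h) (by linarith)
    have := (Finset.sum_eq_zero_iff_of_nonneg hnn).mp hsum v (Finset.mem_univ v)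
    have hne : δ u a v ≠ 0 := ne_of_gt hpos
    have : M - f v = 0 := by
      rcases mul_eq_zero.mp this with h | h
      · exact absurd h hne
      · exact h
    linarith
  -- propagate along reflexive-transitive closure
  have prop : ∀ t, Relation.ReflTransGen
      (fun u v => u ∈ R ∧ ∃ a ∈ A u, a ∈ B ∧ 0 < δ u a v) s₀ t → f t = M := by
    intro t h
    induction h with
    | refl => rfl
    | tail _ hlast ih =>
      obtain ⟨huR, hex⟩ := hlast
      exact step _ huR ih _ hex
  intro s hs t ht
  rw [prop s (hconn s₀ hs₀R s hs), prop t (hconn s₀ hs₀R t ht)]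
end

section
/- Let (x_i) be the total-reward value iteration iterates of a finite stochastic game G with nonnegative rewards, and suppose lim_{k→∞} x_k(s)/k exists for the induced MDP obtained by fixing an optimal memoryless Minimizer mean-payoff strategy τ*. If v_k denotes the optimal k-step total reward in G^{·,τ*}, then x_k(s) ≤ v_k(s) for every k and state s, and consequently limsup_{k→∞} x_k(s)/k ≤ V_mp(s), the mean-payoff value of G at s. -/
/-- Let `x` be the total-reward value iteration iterates of a finite
stochastic game and `v` the optimal `k`-step total rewards of the MDP
obtained by fixing an optimal memoryless Minimizer mean-payoff strategy
`τ*`, with `v k s / k` converging to the mean-payoff value `Vmp s`. Then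
`x k s ≤ v k s` for all `k, s`, and consequently
`limsup_k x k s / k ≤ Vmp s`. -/
theorem vi_iterates_le_mdp_and_limsup_le_meanpayoff
    {S Act : Type*} [Fintype S]
    (isMax : S → Bool) (A : S → Finset Act) (hA : ∀ s, (A s).Nonempty)
    (δ : S → Act → S → ℝ)
    (hδ0 : ∀ s a s', 0 ≤ δ s a s')
    (hδ1 : ∀ s, ∀ a ∈ A s, ∑ s', δ s a s' = 1)
    (r : S → ℝ) (hr : ∀ s, 0 ≤ r s)
    (τstar : S → Act) (hτ : ∀ s, τstar s ∈ A s)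
    (x v : ℕ → S → ℝ) (Vmp : S → ℝ)
    (hx0 : ∀ s, x 0 s = 0)
    (hx : ∀ k s, x (k + 1) s = r s +
      (if isMax s then
        (A s).sup' (hA s) (fun a => ∑ s', δ s a s' * x k s')
      else
        (A s).inf' (hA s) (fun a => ∑ s', δ s a s' * x k s')))
    (hv0 : ∀ s, v 0 s = 0)
    (hv : ∀ k s, v (k + 1) s = r s +
      (if isMax s then
        (A s).sup' (hA s) (fun a => ∑ s', δ s a s' * v k s')
      else
        ∑ s', δ s (τstar s) s' * v k s'))
    (hlim : ∀ s, Filter.Tendsto (fun k : ℕ => v k s / k)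
      Filter.atTop (nhds (Vmp s))) :
    (∀ k s, x k s ≤ v k s) ∧
    (∀ s, Filter.atTop.limsup (fun k : ℕ => x k s / k) ≤ Vmp s) := by
  -- nonnegativity of x
  have hxnn : ∀ k s, 0 ≤ x k s := by
    intro k
    induction k with
    | zero => intro s; simp [hx0]
    | succ k ih =>
      intro s
      rw [hx]
      have hsum : ∀ a, 0 ≤ ∑ s', δ s a s' * x k s' := fun a =>
        Finset.sum_nonneg fun s' _ => mul_nonneg (hδ0 s a s') (ih s')
      have : 0 ≤ (if isMax s then
          (A s).sup' (hA s) (fun a => ∑ s', δ s a s' * x k s')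
        else
          (A s).inf' (hA s) (fun a => ∑ s', δ s a s' * x k s')) := by
        split
        · obtain ⟨a, ha⟩ := hA s
          exact le_trans (hsum a) (Finset.le_sup' (fun a => ∑ s', δ s a s' * x k s') ha)
        · exact Finset.le_inf' _ _ fun a _ => hsum a
      linarith [hr s]
  have hle : ∀ k s, x k s ≤ v k s := by
    intro k
    induction k with
    | zero => intro s; simp [hx0, hv0]
    | succ k ih =>
      intro s
      rw [hx, hv]
      have hsum : ∀ a, (∑ s', δ s a s' * x k s') ≤ ∑ s', δ s a s' * v k s' :=
        fun a => Finset.sum_le_sum fun s' _ =>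
          mul_le_mul_of_nonneg_left (ih s') (hδ0 s a s')
      gcongr ?_ + ?_
      · exact le_rfl
      split
      · exact Finset.sup'_mono_fun fun a _ => hsum a
      · exact le_trans (Finset.inf'_le _ (hτ s)) (hsum (τstar s))
  refine ⟨hle, fun s => ?_⟩
  have hev : ∀ᶠ k in Filter.atTop, (fun k : ℕ => x k s / k) k ≤
      (fun k : ℕ => v k s / k) k := by
    filter_upwards with k
    have : (0:ℝ) ≤ (k:ℝ)⁻¹ := inv_nonneg.mpr (Nat.cast_nonneg k)
    simpa [div_eq_mul_inv] using mul_le_mul_of_nonneg_right (hle k s) this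
  have hcb : Filter.IsCoboundedUnder (· ≤ ·) Filter.atTop (fun k : ℕ => x k s / k) :=
    Filter.isCoboundedUnder_le_of_le Filter.atTop fun k =>
      div_nonneg (hxnn k s) (Nat.cast_nonneg k)
  have hbd : Filter.IsBoundedUnder (· ≤ ·) Filter.atTop (fun k : ℕ => v k s / k) :=
    (hlim s).isBoundedUnder_le
  calc Filter.atTop.limsup (fun k : ℕ => x k s / k)
      ≤ Filter.atTop.limsup (fun k : ℕ => v k s / k) :=
        Filter.limsup_le_limsup hev hcb hbd
    _ = Vmp s := (hlim s).limsup_eq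
end
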